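/- arXiv:1703.00695 — 9 statements merged into one kernel-verified Lean document; each statement's English description precedes it below -/
import Mathlib

section
/- Let $G$ be a group acting on a set $X$ and let $\mathfrak{F}$ be a family of subsets of $X$. For every $A \in \mathfrak{F}$ and every $g \in \Delta_{\mathfrak{F}}(A)$, there exists $B \in \mathfrak{F}$ with $B \subseteq A$ such that $g \cdot \Delta_{\mathfrak{F}}(B) \subseteq \Delta_{\mathfrak{F}}(A)$. -/
open Pointwise

def Delta {G X : Type*} [Group G] [MulAction G X] (F : Set (Set X)) (A : Set X) : Set G :=
  {g | ∃ B ∈ F, B ⊆ A ∧ g • B ⊆ A}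

theorem stmt_3 {G X : Type*} [Group G] [MulAction G X] (F : Set (Set X)) :
    ∀ A ∈ F, ∀ g ∈ Delta (G := G) F A, ∃ B ∈ F, B ⊆ A ∧ g • Delta (G := G) F B ⊆ Delta (G := G) F A := by
  intro A _ g hg
  obtain ⟨B, hBF, hBA, hgBA⟩ := hg
  refine ⟨B, hBF, hBA, ?_⟩
  rintro k ⟨h, ⟨C, hCF, hCB, hhCB⟩, rfl⟩
  refine ⟨C, hCF, hCB.trans hBA, ?_⟩
  show (g * h) • C ⊆ A
  rw [mul_smul]
  intro x hx
  obtain ⟨y, hy, rfl⟩ := hx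
  exact hgBA ⟨y, hhCB hy, rfl⟩
end

section
/- Let $G$ be a group acting on a set $X$, and let $\mathfrak{F}$ be a $G$-invariant, upward directed family of subsets of $X$. Then the following are equivalent: (1) for each $A \in \mathfrak{F}$, every family of sets of the form $\{gA : g \in Y\}$ with $Y \subseteq G$ infinite contains two distinct $g, h \in Y$ with $gA \cap hA \in \mathfrak{F}$ (i.e., $\mathfrak{F}$ is $\mathfrak{F}$-packing large); (2) for each $A \in \mathfrak{F}$, the set $\Delta_{\mathfrak{F}}(A)$ is a $\Delta_\omega$-set in $G$. -/
open Pointwise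

/-- `A` is a `Δ_ω`-set: `e ∈ A` and every infinite subset `Y` of `G` contains two distinct
elements `x, y` with `x⁻¹y ∈ A` and `y⁻¹x ∈ A`. -/
def IsDeltaOmega {G : Type*} [Group G] (A : Set G) : Prop :=
  (1 : G) ∈ A ∧ ∀ Y : Set G, Y.Infinite →
    ∃ x ∈ Y, ∃ y ∈ Y, x ≠ y ∧ x⁻¹ * y ∈ A ∧ y⁻¹ * x ∈ A

lemma mem_delta_iff {G X : Type*} [Group G] [MulAction G X] (F : Set (Set X))
    (hup : ∀ A ∈ F, ∀ C : Set X, A ⊆ C → C ∈ F)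
    (hinv : ∀ A ∈ F, ∀ g : G, g • A ∈ F) {A : Set X} (hA : A ∈ F) (g : G) :
    g ∈ Delta (G := G) F A ↔ (g • A ∩ A) ∈ F := by
  constructor
  · rintro ⟨B, hB, hBA, hgBA⟩
    refine hup _ (hinv B hB g) _ ?_
    exact Set.subset_inter (Set.smul_set_mono hBA) hgBA
  · intro h
    refine ⟨g⁻¹ • (g • A ∩ A), hinv _ h g⁻¹, ?_, ?_⟩
    · intro x hx
      rcases hx with ⟨y, ⟨hy1, _⟩, rfl⟩
      rcases hy1 with ⟨z, hz, rfl⟩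
      simpa using hz
    · rw [smul_inv_smul]
      exact Set.inter_subset_right

theorem stmt_4 {G X : Type*} [Group G] [MulAction G X] (F : Set (Set X))
    (hup : ∀ A ∈ F, ∀ C : Set X, A ⊆ C → C ∈ F)
    (hinv : ∀ A ∈ F, ∀ g : G, g • A ∈ F) :
    (∀ A ∈ F, ∀ Y : Set G, Y.Infinite →
        ∃ g ∈ Y, ∃ h ∈ Y, g ≠ h ∧ (g • A ∩ h • A) ∈ F) ↔
    (∀ A ∈ F, IsDeltaOmega (Delta (G := G) F A)) := by
  constructor
  · intro hpack A hA
    refine ⟨⟨A, hA, le_refl A, by simp⟩, ?_⟩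
    intro Y hY
    obtain ⟨g, hg, h, hh, hne, hF⟩ := hpack A hA Y hY
    refine ⟨g, hg, h, hh, hne, ?_, ?_⟩
    · rw [mem_delta_iff F hup hinv hA]
      have := hinv _ hF g⁻¹
      rwa [Set.smul_set_inter, smul_smul, smul_smul, inv_mul_cancel, one_smul,
        Set.inter_comm] at this
    · rw [mem_delta_iff F hup hinv hA]
      have := hinv _ hF h⁻¹
      rwa [Set.smul_set_inter, smul_smul, smul_smul, inv_mul_cancel, one_smul] at this
  · intro hd A hA Y hY
    obtain ⟨x, hx, y, hy, hne, h1, _⟩ := (hd A hA).2 Y hY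
    refine ⟨x, hx, y, hy, hne, ?_⟩
    rw [mem_delta_iff F hup hinv hA] at h1
    have := hinv _ h1 x
    rwa [Set.smul_set_inter, smul_smul, mul_inv_cancel_left, Set.inter_comm] at this
end

section
/- Let $G$ be an infinite group. If $A$ and $B$ are $\Delta_\omega$-sets of $G$, then $A \cap B$ is a $\Delta_\omega$-set. Hence the family of all $\Delta_\omega$-sets of $G$ is a filter. -/
/-!
By the infinite Ramsey theorem for pairs, every infinite `Y` contains an infinite `Z` on which the
symmetric relation `x⁻¹ * y ∈ A ∧ y⁻¹ * x ∈ A` holds for all distinct pairs or for none; the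
`Δ_ω` property of `A` rules out the second case. Applying the `Δ_ω` property of `B` inside such a
`Z` gives a pair whose quotients lie in both `A` and `B`.
-/

namespace Set.Infinite

variable {α : Type*}

theorem exists_pivot (r : α → α → Prop) {S : Set α} (hS : S.Infinite) :
    ∃ a ∈ S, ∃ b : Bool, {y ∈ S | y ≠ a ∧ (r a y ↔ b)}.Infinite := by
  obtain ⟨a, ha⟩ := hS.nonempty
  have hsplit : S \ {a} =
      {y ∈ S | y ≠ a ∧ (r a y ↔ true)} ∪ {y ∈ S | y ≠ a ∧ (r a y ↔ false)} := by
    ext y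
    by_cases r a y <;> simp [*, and_comm]
  have h := hS.sdiff (finite_singleton a)
  rw [hsplit, infinite_union] at h
  exact ⟨a, ha, h.elim (⟨true, ·⟩) (⟨false, ·⟩)⟩

theorem exists_seq_pivots (r : α → α → Prop) {Y : Set α} (hY : Y.Infinite) :
    ∃ (a : ℕ → α) (c : ℕ → Bool), (∀ n, a n ∈ Y) ∧ Function.Injective a ∧
      ∀ n m, n < m → (r (a n) (a m) ↔ c n) := by
  choose pivot hpivot color hcolor using fun S : {S : Set α // S.Infinite} => S.2.exists_pivot r
  let next (S : {S : Set α // S.Infinite}) : {S : Set α // S.Infinite} :=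
    ⟨{y ∈ S.1 | y ≠ pivot S ∧ (r (pivot S) y ↔ color S)}, hcolor S⟩
  let chain (n : ℕ) : {S : Set α // S.Infinite} := next^[n] ⟨Y, hY⟩
  have chain_succ (n : ℕ) : chain (n + 1) = next (chain n) := Function.iterate_succ_apply' ..
  have chain_anti : Antitone fun n => (chain n).1 :=
    antitone_nat_of_succ_le fun n y hy => by rw [chain_succ] at hy; exact hy.1
  have later (n m : ℕ) (hnm : n < m) :
      pivot (chain m) ≠ pivot (chain n) ∧
        (r (pivot (chain n)) (pivot (chain m)) ↔ color (chain n)) := by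
    have h : pivot (chain m) ∈ (next (chain n)).1 := chain_succ n ▸ chain_anti hnm (hpivot _)
    exact h.2
  refine ⟨fun n => pivot (chain n), fun n => color (chain n),
    fun n => chain_anti (Nat.zero_le n) (hpivot _), fun n m hnm => ?_,
    fun n m hnm => (later n m hnm).2⟩
  by_contra hne
  rcases Nat.lt_or_gt_of_ne hne with h | h
  · exact (later n m h).1 hnm.symm
  · exact (later m n h).1 hnm

theorem exists_pairwise_or_pairwise_not {r : α → α → Prop} [Std.Symm r] {Y : Set α}
    (hY : Y.Infinite) :
    ∃ Z ⊆ Y, Z.Infinite ∧ (Z.Pairwise r ∨ Z.Pairwise fun x y => ¬ r x y) := by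
  obtain ⟨a, c, haY, ha, hac⟩ := hY.exists_seq_pivots r
  obtain ⟨b, hb⟩ := Finite.exists_infinite_fiber c
  have hmono : (a '' (c ⁻¹' {b})).Pairwise fun x y => r x y ↔ b := by
    rintro _ ⟨n, hn, rfl⟩ _ ⟨m, hm, rfl⟩ hnm
    rcases Nat.lt_or_gt_of_ne (ne_of_apply_ne a hnm) with h | h
    · rw [hac n m h, hn]
    · rw [Std.Symm.iff (r := r), hac m n h, hm]
  refine ⟨a '' (c ⁻¹' {b}), image_subset_range a _ |>.trans (range_subset_iff.2 haY),
    (infinite_coe_iff.1 hb).image ha.injOn, ?_⟩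
  cases b
  · exact Or.inr (hmono.imp fun x y h => by simpa using h)
  · exact Or.inl (hmono.imp fun x y h => by simpa using h)

end Set.Infinite

theorem IsDeltaOmega.exists_infinite_pairwise {G : Type*} [Group G] {A : Set G}
    (hA : IsDeltaOmega A) {Y : Set G} (hY : Y.Infinite) :
    ∃ Z ⊆ Y, Z.Infinite ∧ Z.Pairwise fun x y => x⁻¹ * y ∈ A := by
  let r (x y : G) : Prop := x⁻¹ * y ∈ A ∧ y⁻¹ * x ∈ A
  have : Std.Symm r := ⟨fun _ _ h => h.symm⟩
  obtain ⟨Z, hZY, hZ, hr | hnr⟩ := hY.exists_pairwise_or_pairwise_not (r := r)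
  · exact ⟨Z, hZY, hZ, hr.imp fun x y h => h.1⟩
  · obtain ⟨x, hx, y, hy, hxy, h⟩ := hA.2 Z hZ
    exact absurd h (hnr hx hy hxy)

theorem stmt_6_general {G : Type*} [Group G] (A B : Set G)
    (hA : IsDeltaOmega A) (hB : IsDeltaOmega B) :
    IsDeltaOmega (A ∩ B) := by
  refine ⟨⟨hA.1, hB.1⟩, fun Y hY => ?_⟩
  obtain ⟨Z, hZY, hZ, hAZ⟩ := hA.exists_infinite_pairwise hY
  obtain ⟨x, hx, y, hy, hxy, hBxy, hByx⟩ := hB.2 Z hZ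
  exact ⟨x, hZY hx, y, hZY hy, hxy, ⟨hAZ hx hy hxy, hBxy⟩, ⟨hAZ hy hx hxy.symm, hByx⟩⟩

theorem stmt_6 {G : Type*} [Group G] [Infinite G] (A B : Set G)
    (hA : IsDeltaOmega A) (hB : IsDeltaOmega B) :
    IsDeltaOmega (A ∩ B) :=
  stmt_6_general A B hA hB
end

section
/- Let $G$ be an infinite group and let $A$ be a $\Delta_\omega$-set of $G$. Then $A$ is syndetic from the left: there exists a finite subset $F \subseteq G$ such that $G = FA$. -/
open Pointwise

theorem stmt_7 {G : Type*} [Group G] [Infinite G] (A : Set G) (hA : IsDeltaOmega A) :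
    ∃ F : Set G, F.Finite ∧ F * A = Set.univ := by
  by_contra hcon
  push_neg at hcon
  have H : ∀ S : Set G, S.Finite → ∃ g : G, g ∉ S * A := by
    intro S hS
    have := hcon S hS
    rcases Set.ne_univ_iff_exists_notMem _ |>.mp this with ⟨g, hg⟩
    exact ⟨g, hg⟩
  classical
  -- accumulate finite sets
  let T : ℕ → {s : Set G // s.Finite} := fun n =>
    Nat.rec ⟨∅, Set.finite_empty⟩
      (fun _ p => ⟨insert (Classical.choose (H p.1 p.2)) p.1, p.2.insert _⟩) n
  let f : ℕ → G := fun n => Classical.choose (H (T n).1 (T n).2)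
  have hf : ∀ n, f n ∉ (T n).1 * A := fun n => Classical.choose_spec (H (T n).1 (T n).2)
  have hTsucc : ∀ n, (T (n+1)).1 = insert (f n) (T n).1 := fun n => rfl
  have hTmono : ∀ {m n : ℕ}, m ≤ n → (T m).1 ⊆ (T n).1 := by
    intro m n hmn
    induction hmn with
    | refl => exact subset_rfl
    | step h ih => exact fun x hx => by rw [hTsucc]; exact Set.mem_insert_of_mem _ (ih hx)
  have hmem : ∀ {i j : ℕ}, i < j → f i ∈ (T j).1 := by
    intro i j hij
    apply hTmono hij
    rw [hTsucc]; exact Set.mem_insert _ _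
  have key : ∀ {i j : ℕ}, i < j → (f i)⁻¹ * f j ∉ A := by
    intro i j hij hmemA
    exact hf j (Set.mem_mul.mpr ⟨f i, hmem hij, (f i)⁻¹ * f j, hmemA, by group⟩)
  have finj : Function.Injective f := by
    intro i j hij
    by_contra hne
    rcases Nat.lt_or_ge i j with h | h
    · exact key h (by rw [hij, inv_mul_cancel]; exact hA.1)
    · have h' : j < i := lt_of_le_of_ne h (Ne.symm hne)
      exact key h' (by rw [hij, inv_mul_cancel]; exact hA.1)
  have hinf : (Set.range f).Infinite := Set.infinite_range_of_injective finj
  obtain ⟨x, hx, y, hy, hxy, hxA, hyA⟩ := hA.2 _ hinf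
  obtain ⟨i, rfl⟩ := hx
  obtain ⟨j, rfl⟩ := hy
  rcases Nat.lt_or_ge i j with h | h
  · exact key h hxA
  · exact key (lt_of_le_of_ne h (fun e => hxy (by rw [e]))) hyA
end

section
/- Let $G$ be an infinite group with the discrete topology, let $\beta G$ be its Stone–Čech compactification identified with the space of ultrafilters on $G$, with the standard semigroup operation. For an ultrafilter $p$ on $G$, $p$ lies in the closure of the set $\{q^{-1}q : q \in \beta G\}$ if and only if either $p$ is the principal ultrafilter at the identity $e$, or for every $P \in p$ there exists an injective sequence $(x_n)_{n \in \omega}$ in $G$ such that $x_m^{-1} x_n \in P$ for all $m < n$. -/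
/-- The standard extension of the group multiplication to `βG`:
`A ∈ p * q` iff `{x | x⁻¹A ∈ q} ∈ p`. -/
def ultraMul {G : Type*} [Group G] (p q : Ultrafilter G) : Ultrafilter G :=
  p.bind fun x => q.map fun y => x * y

/-- `q⁻¹ = {A⁻¹ : A ∈ q}`. -/
def ultraInv {G : Type*} [Group G] (q : Ultrafilter G) : Ultrafilter G :=
  q.map fun x => x⁻¹

lemma mem_ultraMulInv {G : Type*} [Group G] {q : Ultrafilter G} {A : Set G} :
    A ∈ ultraMul (ultraInv q) q ↔ {x | {y | x⁻¹ * y ∈ A} ∈ q} ∈ q := by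
  show A ∈ (Filter.bind (ultraInv q : Filter G) fun x => Filter.map (fun y => x * y) q) ↔ _
  rw [Filter.mem_bind']
  show (fun x => x⁻¹) ⁻¹' {a | (fun y => a * y) ⁻¹' A ∈ q} ∈ q ↔ _
  rfl

open Classical in
noncomputable def pickElt {G : Type*} [Group G] (S : Set G) : G :=
  if h : S.Nonempty then h.choose else 1

lemma pickElt_mem {G : Type*} [Group G] {S : Set G} (h : S.Nonempty) : pickElt S ∈ S := by
  rw [pickElt, dif_pos h]
  exact h.choose_spec

noncomputable def seqT {G : Type*} [Group G] (P' Q : Set G) : ℕ → Set G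
  | 0 => Q
  | n + 1 => seqT P' Q n ∩ {z | (pickElt (seqT P' Q n))⁻¹ * z ∈ P'}

lemma exists_seq_of_mem {G : Type*} [Group G] (q : Ultrafilter G) (P' : Set G)
    (hQ : {x | {y | x⁻¹ * y ∈ P'} ∈ q} ∈ q) (h1 : (1 : G) ∉ P') :
    ∃ x : ℕ → G, Function.Injective x ∧ ∀ m n : ℕ, m < n → (x m)⁻¹ * x n ∈ P' := by
  set Q : Set G := {x | {y | x⁻¹ * y ∈ P'} ∈ q} with hQdef
  have hT : ∀ n, seqT P' Q n ∈ q ∧ seqT P' Q n ⊆ Q := by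
    intro n
    induction n with
    | zero => exact ⟨hQ, subset_rfl⟩
    | succ n ih =>
      have hne : (seqT P' Q n).Nonempty := Ultrafilter.nonempty_of_mem ih.1
      have hpickmem : pickElt (seqT P' Q n) ∈ seqT P' Q n := pickElt_mem hne
      have hpick : pickElt (seqT P' Q n) ∈ Q := ih.2 hpickmem
      exact ⟨Filter.inter_mem ih.1 hpick,
        (Set.inter_subset_left).trans ih.2⟩
  set x : ℕ → G := fun n => pickElt (seqT P' Q n) with hxdef
  have hxmem : ∀ n, x n ∈ seqT P' Q n := by
    intro n
    have hne : (seqT P' Q n).Nonempty := Ultrafilter.nonempty_of_mem (hT n).1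
    exact pickElt_mem hne
  have hanti : ∀ m n : ℕ, m ≤ n → seqT P' Q n ⊆ seqT P' Q m := by
    intro m n h
    induction h with
    | refl => exact subset_rfl
    | step h ih => exact (Set.inter_subset_left).trans ih
  have hkey : ∀ m n : ℕ, m < n → (x m)⁻¹ * x n ∈ P' := by
    intro m n hmn
    have : x n ∈ seqT P' Q (m + 1) := hanti (m + 1) n hmn (hxmem n)
    exact this.2
  refine ⟨x, ?_, hkey⟩
  intro m n hmn
  by_contra hne
  rcases Nat.lt_or_ge m n with h | h
  · have := hkey m n h
    rw [hmn, inv_mul_cancel] at this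
    exact h1 this
  · have h' : n < m := lt_of_le_of_ne h (Ne.symm hne)
    have := hkey n m h'
    rw [hmn, inv_mul_cancel] at this
    exact h1 this

theorem stmt_9 {G : Type*} [Group G] [Infinite G] (p : Ultrafilter G) :
    p ∈ closure {r : Ultrafilter G | ∃ q : Ultrafilter G, r = ultraMul (ultraInv q) q} ↔
      (p = (pure (1 : G) : Ultrafilter G) ∨
        ∀ P ∈ p, ∃ x : ℕ → G, Function.Injective x ∧
          ∀ m n : ℕ, m < n → (x m)⁻¹ * x n ∈ P) := by
  rw [ultrafilterBasis_is_basis.mem_closure_iff]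
  constructor
  · intro h
    by_cases hp : p = (pure (1 : G) : Ultrafilter G)
    · exact Or.inl hp
    right
    intro P hP
    have h1 : ({1}ᶜ : Set G) ∈ p := by
      rw [Ultrafilter.compl_mem_iff_notMem]
      intro hmem
      obtain ⟨a, ha, hpa⟩ := Ultrafilter.eq_pure_of_finite_mem (Set.finite_singleton 1) hmem
      rw [Set.mem_singleton_iff] at ha
      exact hp (ha ▸ hpa)
    have hP' : P ∩ {1}ᶜ ∈ p := Filter.inter_mem hP h1
    obtain ⟨r, hro, q, rfl⟩ :=
      h {u : Ultrafilter G | P ∩ {1}ᶜ ∈ u} ⟨P ∩ {1}ᶜ, rfl⟩ hP'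
    rw [Set.mem_setOf_eq, mem_ultraMulInv] at hro
    obtain ⟨x, hinj, hx⟩ := exists_seq_of_mem q (P ∩ {1}ᶜ) hro (by simp)
    exact ⟨x, hinj, fun m n hmn => (hx m n hmn).1⟩
  · rintro (rfl | h)
    · intro o ho hpo
      have heq : ultraMul (ultraInv (pure 1)) (pure 1) = (pure 1 : Ultrafilter G) := by
        apply Ultrafilter.coe_injective
        ext A
        show A ∈ (ultraMul (ultraInv (pure 1)) (pure 1) : Ultrafilter G) ↔
          A ∈ (pure 1 : Ultrafilter G)
        rw [mem_ultraMulInv]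
        simp
      exact ⟨pure 1, hpo, pure 1, heq.symm⟩
    · rintro o ⟨P, rfl⟩ hpo
      obtain ⟨x, hinj, hx⟩ := h P hpo
      obtain ⟨u, hu⟩ := Ultrafilter.exists_le (Filter.atTop : Filter ℕ)
      refine ⟨ultraMul (ultraInv (u.map x)) (u.map x), ?_, u.map x, rfl⟩
      rw [Set.mem_setOf_eq, mem_ultraMulInv, Ultrafilter.mem_map]
      apply Filter.univ_mem'
      intro n
      rw [Set.mem_preimage, Set.mem_setOf_eq, Ultrafilter.mem_map]
      have hIoi : Set.Ioi n ∈ u := hu (Filter.Ioi_mem_atTop n)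
      refine Filter.mem_of_superset hIoi ?_
      intro m hm
      exact hx n m hm
end

section
/- For every ultrafilter $q$ on an infinite group $G$, the ultrafilter $q^{-1}q$ contains every $\Delta_\omega$-set of $G$; equivalently, $q^{-1}q \in \overline{\varphi}$ where $\varphi$ is the filter of $\Delta_\omega$-sets. -/
private lemma seq_lemma {G : Type*} (q : Ultrafilter G) (S : Set G) (T : G → Set G)
    (hS : S ∈ q) (hT : ∀ g ∈ S, T g ∈ q) :
    ∃ z : ℕ → G, (∀ n, z n ∈ S) ∧ ∀ i n, i < n → z n ∈ T (z i) := by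
  classical
  let pick : {s : Set G // s ∈ q ∧ s ⊆ S} → G := fun s =>
    (Filter.nonempty_of_mem (f := (q : Filter G)) s.2.1).choose
  have pick_mem : ∀ s, pick s ∈ s.1 := fun s =>
    (Filter.nonempty_of_mem (f := (q : Filter G)) s.2.1).choose_spec
  let step : {s : Set G // s ∈ q ∧ s ⊆ S} → {s : Set G // s ∈ q ∧ s ⊆ S} := fun s =>
    ⟨s.1 ∩ T (pick s), Filter.inter_mem s.2.1 (hT _ (s.2.2 (pick_mem s))),
      fun x hx => s.2.2 hx.1⟩
  let f : ℕ → {s : Set G // s ∈ q ∧ s ⊆ S} := fun n => step^[n] ⟨S, hS, subset_rfl⟩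
  let z : ℕ → G := fun n => pick (f n)
  have hf_succ : ∀ n, f (n + 1) = step (f n) := fun n =>
    Function.iterate_succ_apply' step n _
  have hsub : ∀ n, (f (n + 1)).1 ⊆ (f n).1 := by
    intro n
    rw [hf_succ n]
    exact Set.inter_subset_left
  have hmono : ∀ i n, i ≤ n → (f n).1 ⊆ (f i).1 := by
    intro i n hin
    induction n with
    | zero => simp_all
    | succ m ih =>
      rcases Nat.lt_or_ge i (m + 1) with h | h
      · exact (hsub m).trans (ih (Nat.lt_succ_iff.mp h))
      · have : i = m + 1 := le_antisymm hin h
        subst this; exact subset_rfl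
  have hz : ∀ n, z n ∈ (f n).1 := fun n => pick_mem (f n)
  refine ⟨z, fun n => (f n).2.2 (hz n), fun i n hin => ?_⟩
  have h1 : z n ∈ (f (i + 1)).1 := hmono (i + 1) n hin (hz n)
  rw [hf_succ i] at h1
  exact h1.2

theorem stmt_11 {G : Type*} [Group G] [Infinite G] (q : Ultrafilter G) :
    ∀ A : Set G, IsDeltaOmega A → A ∈ ultraMul (ultraInv q) q := by
  classical
  intro A hA
  by_contra hnot
  have hmem : A ∈ ultraMul (ultraInv q) q ↔ {z : G | {y : G | z⁻¹ * y ∈ A} ∈ q} ∈ q := by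
    have h1 : A ∈ ultraMul (ultraInv q) q ↔
        {x : G | {y : G | x * y ∈ A} ∈ q} ∈ ultraInv q := by
      change A ∈ Filter.bind (↑(ultraInv q))
        (fun x => ↑(Ultrafilter.map (fun y => x * y) q)) ↔ _
      rw [Filter.mem_bind']
      simp only [Ultrafilter.mem_coe, Ultrafilter.mem_map, Set.preimage_setOf_eq]
      exact Iff.rfl
    rw [h1, ultraInv, Ultrafilter.mem_map]
    simp only [Set.preimage_setOf_eq]
  rw [hmem] at hnot
  have hS : {z : G | {y : G | z⁻¹ * y ∈ A} ∈ q}ᶜ ∈ q :=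
    Ultrafilter.compl_mem_iff_notMem.2 hnot
  set S : Set G := {z : G | {y : G | z⁻¹ * y ∈ A} ∈ q}ᶜ with hSdef
  have hT : ∀ g ∈ S, {y : G | g⁻¹ * y ∈ A}ᶜ ∈ q := by
    intro g hg
    exact Ultrafilter.compl_mem_iff_notMem.2 hg
  obtain ⟨z, hzS, hzT⟩ := seq_lemma q S (fun g => {y : G | g⁻¹ * y ∈ A}ᶜ) hS hT
  have hinj : Function.Injective z := by
    intro i j hij
    by_contra hne
    rcases Nat.lt_or_ge i j with h | h
    · have := hzT i j h
      rw [← hij] at this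
      simp at this
      exact this hA.1
    · have h' : j < i := lt_of_le_of_ne h (Ne.symm hne)
      have := hzT j i h'
      rw [hij] at this
      simp at this
      exact this hA.1
  have hYinf : (Set.range z).Infinite := Set.infinite_range_of_injective hinj
  obtain ⟨x, ⟨i, hxi⟩, y, ⟨j, hyj⟩, hxy, hxyA, hyxA⟩ := hA.2 (Set.range z) hYinf
  subst hxi hyj
  have hij : i ≠ j := fun h => hxy (by rw [h])
  rcases Nat.lt_or_ge i j with h | h
  · exact hzT i j h hxyA
  · exact hzT j i (lt_of_le_of_ne h (Ne.symm hij)) hyxA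
end

section
/- Let $G$ be an infinite group, let $A$ be a $\Delta_\omega$-set of $G$, and let $\tau$ be a left translation invariant topology on $G$ such that the inversion map $x \mapsto x^{-1}$ is continuous at the identity $e$. Then the closure $\mathrm{cl}_\tau A$ is a neighborhood of $e$ in $\tau$. -/
open Set Function
open scoped Pointwise

theorem IsDeltaOmega.exists_lt_inv_mul_mem {G : Type*} [Group G] {A : Set G}
    (hA : IsDeltaOmega A) (x : ℕ → G) : ∃ m n, m < n ∧ (x m)⁻¹ * x n ∈ A := by
  by_contra! hx
  have hinj : Injective x := Injective.of_lt_imp_ne fun m n hmn hxmn =>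
    hx m n hmn (by simpa [hxmn] using hA.1)
  obtain ⟨_, ⟨m, rfl⟩, _, ⟨n, rfl⟩, hne, hmn, hnm⟩ := hA.2 _ (infinite_range_of_injective hinj)
  rcases lt_or_gt_of_ne (ne_of_apply_ne x hne) with h | h
  · exact hx m n h hmn
  · exact hx n m h hnm

section ContinuousConstSMul

variable {G : Type*} [Group G] [TopologicalSpace G] [ContinuousConstSMul G G]

theorem mem_closure_smul_self_of_one_mem_closure {W : Set G} (h : 1 ∈ closure W) (g : G) :
    g ∈ closure (g • W) := by
  rw [closure_smul]
  simpa using smul_mem_smul_set (a := g) h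

theorem exists_seq_inv_mul_mem_of_one_mem_closure {W : Set G} (hW : IsOpen W)
    (h : 1 ∈ closure W) : ∃ x : ℕ → G, ∀ m n, m < n → (x m)⁻¹ * x n ∈ W := by
  have hstep : ∀ p : G × Set G, IsOpen p.2 → p.1 ∈ p.2 → ∃ z, z ∈ p.2 ∩ p.1 • W :=
    fun p hU hz => mem_closure_iff.1 (mem_closure_smul_self_of_one_mem_closure h p.1) p.2 hU hz
  choose! next hnext using hstep
  let step : G × Set G → G × Set G := fun p => (next p, p.2 ∩ p.1 • W)
  -- `S n = (x n, ⋂ m < n, x m • W)`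
  let S : ℕ → G × Set G := fun n => step^[n] (1, univ)
  have hS_succ (n : ℕ) : S (n + 1) = step (S n) := iterate_succ_apply' step n _
  have hS (n : ℕ) : IsOpen (S n).2 ∧ (S n).1 ∈ (S n).2 := by
    induction n with
    | zero => exact ⟨isOpen_univ, mem_univ _⟩
    | succ n ih =>
      rw [hS_succ]
      exact ⟨ih.1.inter (hW.smul _), hnext _ ih.1 ih.2⟩
  have hanti : Antitone fun n => (S n).2 :=
    antitone_nat_of_succ_le fun n => by rw [hS_succ]; exact inter_subset_left
  refine ⟨fun n => (S n).1, fun m n hmn => ?_⟩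
  have hmem : (S n).1 ∈ (S (m + 1)).2 := hanti (Nat.succ_le_of_lt hmn) (hS n).2
  rw [hS_succ] at hmem
  exact mem_smul_set_iff_inv_smul_mem.1 hmem.2

end ContinuousConstSMul

theorem stmt_12_general {G : Type*} [Group G] (A : Set G) (hA : IsDeltaOmega A)
    (τ : TopologicalSpace G)
    (hleft : ∀ g : G, Continuous fun x : G => g * x) :
    closure A ∈ nhds (1 : G) := by
  have : ContinuousConstSMul G G := ⟨hleft⟩
  by_contra hA_nhds
  have h1 : (1 : G) ∈ closure (closure A)ᶜ := by
    rwa [closure_compl, mem_compl_iff, mem_interior_iff_mem_nhds]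
  obtain ⟨x, hx⟩ := exists_seq_inv_mul_mem_of_one_mem_closure isClosed_closure.isOpen_compl h1
  obtain ⟨m, n, hmn, hmem⟩ := hA.exists_lt_inv_mul_mem x
  exact hx m n hmn (subset_closure hmem)

theorem stmt_12 {G : Type*} [Group G] [Infinite G] (A : Set G) (hA : IsDeltaOmega A)
    (τ : TopologicalSpace G)
    (hleft : ∀ g : G, Continuous fun x : G => g * x)
    (hinv : ContinuousAt (fun x : G => x⁻¹) (1 : G)) :
    closure A ∈ nhds (1 : G) :=
  stmt_12_general A hA τ hleft
end

section
/- Let $G$ be an infinite group. If $A$ and $B$ are $\Delta_{<\omega}$-sets of $G$, then $A \cap B$ is a $\Delta_{<\omega}$-set; hence the family of all $\Delta_{<\omega}$-sets of $G$ is a filter. -/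
open Finset

/-- Finite Ramsey theorem for pairs, two colors. -/
lemma ramsey_pairs {V : Type*} [DecidableEq V] (c : V → V → Bool)
    (hc : ∀ x y, c x y = c y x) :
    ∀ k a b : ℕ, a + b ≤ k → ∃ N : ℕ, ∀ Y : Finset V, N ≤ Y.card →
      (∃ S ⊆ Y, S.card = a ∧ ∀ x ∈ S, ∀ y ∈ S, x ≠ y → c x y = true) ∨
      (∃ S ⊆ Y, S.card = b ∧ ∀ x ∈ S, ∀ y ∈ S, x ≠ y → c x y = false) := by
  intro k
  induction k with
  | zero =>
    intro a b hab
    refine ⟨0, fun Y _ => ?_⟩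
    left
    exact ⟨∅, empty_subset Y, by simp only [card_empty]; omega, by simp⟩
  | succ k ih =>
    intro a b hab
    rcases Nat.eq_zero_or_pos a with ha0 | ha
    · exact ⟨0, fun Y _ => Or.inl ⟨∅, empty_subset Y, by simp [ha0], by simp⟩⟩
    rcases Nat.eq_zero_or_pos b with hb0 | hb
    · exact ⟨0, fun Y _ => Or.inr ⟨∅, empty_subset Y, by simp [hb0], by simp⟩⟩
    obtain ⟨N₁, hN₁⟩ := ih (a - 1) b (by omega)
    obtain ⟨N₂, hN₂⟩ := ih a (b - 1) (by omega)
    refine ⟨N₁ + N₂ + 1, fun Y hY => ?_⟩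
    have hYne : Y.Nonempty := card_pos.mp (by omega)
    obtain ⟨v, hv⟩ := hYne
    set Y' := Y.erase v with hY'
    have hY'card : N₁ + N₂ ≤ Y'.card := by
      rw [hY', card_erase_of_mem hv]; omega
    set T := Y'.filter (fun x => c v x = true) with hT
    set F := Y'.filter (fun x => c v x = false) with hF
    have hTF : T.card + F.card = Y'.card := by
      have h := card_filter_add_card_filter_not (s := Y') (p := fun x => c v x = true)
      simpa [hT, hF, Bool.not_eq_true] using h
    have hcase : N₁ ≤ T.card ∨ N₂ ≤ F.card := by omega
    rcases hcase with h1 | h2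
    · rcases hN₁ T h1 with ⟨S, hS, hScard, hSc⟩ | ⟨S, hS, hScard, hSc⟩
      · -- true clique of size a-1 among true-neighbours of v; add v
        left
        have hvS : v ∉ S := by
          intro hvS
          have := mem_erase.mp (mem_filter.mp (hS hvS)).1
          exact this.1 rfl
        refine ⟨insert v S, ?_, ?_, ?_⟩
        · intro x hx
          rcases mem_insert.mp hx with rfl | hx
          · exact hv
          · exact mem_of_mem_erase (mem_filter.mp (hS hx)).1
        · rw [card_insert_of_notMem hvS, hScard]; omega
        · intro x hx y hy hxy
          rcases mem_insert.mp hx with hxv | hxS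
          · rcases mem_insert.mp hy with hyv | hyS
            · exact absurd (hxv.trans hyv.symm) hxy
            · rw [hxv]; exact (mem_filter.mp (hS hyS)).2
          · rcases mem_insert.mp hy with hyv | hyS
            · rw [hyv, hc]; exact (mem_filter.mp (hS hxS)).2
            · exact hSc x hxS y hyS hxy
      · right
        refine ⟨S, fun x hx => mem_of_mem_erase (mem_filter.mp (hS hx)).1, hScard, hSc⟩
    · rcases hN₂ F h2 with ⟨S, hS, hScard, hSc⟩ | ⟨S, hS, hScard, hSc⟩
      · left
        refine ⟨S, fun x hx => mem_of_mem_erase (mem_filter.mp (hS hx)).1, hScard, hSc⟩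
      · right
        have hvS : v ∉ S := by
          intro hvS
          have := mem_erase.mp (mem_filter.mp (hS hvS)).1
          exact this.1 rfl
        refine ⟨insert v S, ?_, ?_, ?_⟩
        · intro x hx
          rcases mem_insert.mp hx with rfl | hx
          · exact hv
          · exact mem_of_mem_erase (mem_filter.mp (hS hx)).1
        · rw [card_insert_of_notMem hvS, hScard]; omega
        · intro x hx y hy hxy
          rcases mem_insert.mp hx with hxv | hxS
          · rcases mem_insert.mp hy with hyv | hyS
            · exact absurd (hxv.trans hyv.symm) hxy
            · rw [hxv]; exact (mem_filter.mp (hS hyS)).2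
          · rcases mem_insert.mp hy with hyv | hyS
            · rw [hyv, hc]; exact (mem_filter.mp (hS hxS)).2
            · exact hSc x hxS y hyS hxy

/-- `A` is a `Δ_{<ω}`-set: `e ∈ A` and there is `n` such that every `n`-element subset of `G`
contains distinct `x, y` with `x⁻¹y ∈ A` and `y⁻¹x ∈ A`. -/
def IsDeltaLtOmega {G : Type*} [Group G] (A : Set G) : Prop :=
  (1 : G) ∈ A ∧ ∃ n : ℕ, ∀ Y : Finset G, Y.card = n →
    ∃ x ∈ Y, ∃ y ∈ Y, x ≠ y ∧ x⁻¹ * y ∈ A ∧ y⁻¹ * x ∈ A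

theorem stmt_14 {G : Type*} [Group G] [Infinite G] (A B : Set G)
    (hA : IsDeltaLtOmega A) (hB : IsDeltaLtOmega B) :
    IsDeltaLtOmega (A ∩ B) := by
  classical
  obtain ⟨hA1, nA, hAn⟩ := hA
  obtain ⟨hB1, nB, hBn⟩ := hB
  refine ⟨⟨hA1, hB1⟩, ?_⟩
  set c : G → G → Bool := fun x y => decide (x⁻¹ * y ∈ A ∧ y⁻¹ * x ∈ A) with hcdef
  have hc : ∀ x y : G, c x y = c y x := by
    intro x y; simp only [hcdef, decide_eq_decide]; tauto
  obtain ⟨N, hN⟩ := ramsey_pairs c hc (nB + nA) nB nA le_rfl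
  refine ⟨N, fun Y hYcard => ?_⟩
  rcases hN Y (by omega) with ⟨S, hS, hScard, hSc⟩ | ⟨S, hS, hScard, hSc⟩
  · -- all pairs in S are A-good; find a B-good pair in S
    obtain ⟨x, hx, y, hy, hxy, hxyB⟩ := hBn S hScard
    have hAgood : x⁻¹ * y ∈ A ∧ y⁻¹ * x ∈ A := by
      have := hSc x hx y hy hxy
      simpa [hcdef] using this
    exact ⟨x, hS hx, y, hS hy, hxy, ⟨hAgood.1, hxyB.1⟩, ⟨hAgood.2, hxyB.2⟩⟩
  · -- all pairs in S are A-bad, contradicting hA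
    obtain ⟨x, hx, y, hy, hxy, hxyA⟩ := hAn S hScard
    have := hSc x hx y hy hxy
    simp only [hcdef, decide_eq_false_iff_not] at this
    exact absurd ⟨hxyA.1, hxyA.2⟩ this
end

section
/- Let $G$ be an infinite group and let $\psi$ be the filter of all $\Delta_{<\omega}$-sets of $G$. An ultrafilter $p$ on $G$ satisfies $p \in \overline{\psi}$ if and only if either $p$ is the principal ultrafilter at $e$, or for every $A \in p$ there exists a sequence $(X_n)_{n \in \omega}$ of subsets of $G$ with $|X_n| = n+1$, $X_n = \{x_{n0}, \ldots, x_{nn}\}$, such that $x_{ni}^{-1} x_{nj} \in A$ for all $i < j \leq n$. -/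
open Classical in
lemma tourn {α : Type*} (r : α → α → Prop) :
    ∀ n : ℕ, ∀ s : Finset α, 2 ^ n ≤ s.card →
      (∀ x ∈ s, ∀ y ∈ s, x ≠ y → r x y ∨ r y x) →
      ∃ f : ℕ → α, (∀ i ≤ n, f i ∈ s) ∧
        (∀ i ≤ n, ∀ j ≤ n, i ≠ j → f i ≠ f j) ∧
        (∀ i j, i < j → j ≤ n → r (f i) (f j)) := by
  classical
  intro n
  induction n with
  | zero =>
    intro s hs _
    obtain ⟨a, ha⟩ := Finset.card_pos.mp (by simpa using hs)
    exact ⟨fun _ => a, fun i _ => ha, fun i hi j hj hij => by omega,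
      fun i j hij hj => by omega⟩
  | succ n ih =>
    intro s hs htot
    have hpos : 0 < s.card := lt_of_lt_of_le (by positivity) hs
    obtain ⟨a, ha⟩ := Finset.card_pos.mp hpos
    set s₁ := (s.erase a).filter (fun y => r a y) with hs₁
    set s₂ := (s.erase a).filter (fun y => ¬ r a y) with hs₂
    have hsplit : s₁.card + s₂.card = (s.erase a).card :=
      Finset.card_filter_add_card_filter_not _
    have herase : (s.erase a).card = s.card - 1 := Finset.card_erase_of_mem ha
    have hpow : 2 ^ (n + 1) = 2 ^ n + 2 ^ n := by ring
    have hcases : 2 ^ n ≤ s₁.card ∨ 2 ^ n ≤ s₂.card := by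
      by_contra h
      push_neg at h
      have h2 : (0:ℕ) < 2 ^ n := by positivity
      omega
    have hmem1 : ∀ y ∈ s₁, y ∈ s ∧ y ≠ a ∧ r a y := by
      intro y hy
      rw [hs₁, Finset.mem_filter, Finset.mem_erase] at hy
      exact ⟨hy.1.2, hy.1.1, hy.2⟩
    have hmem2 : ∀ y ∈ s₂, y ∈ s ∧ y ≠ a ∧ r y a := by
      intro y hy
      rw [hs₂, Finset.mem_filter, Finset.mem_erase] at hy
      refine ⟨hy.1.2, hy.1.1, ?_⟩
      rcases htot a ha y hy.1.2 (Ne.symm hy.1.1) with h | h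
      · exact absurd h hy.2
      · exact h
    rcases hcases with h1 | h2
    · obtain ⟨f, hf1, hf2, hf3⟩ := ih s₁ h1
        (fun x hx y hy hxy => htot x (hmem1 x hx).1 y (hmem1 y hy).1 hxy)
      refine ⟨fun i => if i = 0 then a else f (i - 1), ?_, ?_, ?_⟩
      · intro i hi
        by_cases h : i = 0
        · simp only [if_pos h]; exact ha
        · simp only [if_neg h]; exact (hmem1 _ (hf1 (i-1) (by omega))).1
      · intro i hi j hj hij
        by_cases h : i = 0 <;> by_cases h' : j = 0
        · omega
        · simp only [if_pos h, if_neg h']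
          exact fun e => (hmem1 _ (hf1 (j-1) (by omega))).2.1 e.symm
        · simp only [if_neg h, if_pos h']
          exact fun e => (hmem1 _ (hf1 (i-1) (by omega))).2.1 e
        · simp only [if_neg h, if_neg h']
          exact hf2 (i-1) (by omega) (j-1) (by omega) (by omega)
      · intro i j hij hj
        have h' : ¬ j = 0 := by omega
        by_cases h : i = 0
        · simp only [if_pos h, if_neg h']
          exact (hmem1 _ (hf1 (j-1) (by omega))).2.2
        · simp only [if_neg h, if_neg h']
          exact hf3 (i-1) (j-1) (by omega) (by omega)
    · obtain ⟨f, hf1, hf2, hf3⟩ := ih s₂ h2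
        (fun x hx y hy hxy => htot x (hmem2 x hx).1 y (hmem2 y hy).1 hxy)
      refine ⟨fun i => if i ≤ n then f i else a, ?_, ?_, ?_⟩
      · intro i hi
        by_cases h : i ≤ n
        · simp only [if_pos h]; exact (hmem2 _ (hf1 i h)).1
        · simp only [if_neg h]; exact ha
      · intro i hi j hj hij
        by_cases h : i ≤ n <;> by_cases h' : j ≤ n
        · simp only [if_pos h, if_pos h']; exact hf2 i h j h' hij
        · simp only [if_pos h, if_neg h']; exact (hmem2 _ (hf1 i h)).2.1
        · simp only [if_neg h, if_pos h']
          exact fun e => (hmem2 _ (hf1 j h')).2.1 e.symm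
        · omega
      · intro i j hij hj
        have h : i ≤ n := by omega
        by_cases h' : j ≤ n
        · simp only [if_pos h, if_pos h']; exact hf3 i j hij h'
        · simp only [if_pos h, if_neg h']; exact (hmem2 _ (hf1 i h)).2.2

theorem stmt_16 {G : Type*} [Group G] [Infinite G] (p : Ultrafilter G) :
    p ∈ ⋂ A ∈ {A : Set G | IsDeltaLtOmega A}, {p : Ultrafilter G | A ∈ p} ↔
      (p = (pure (1 : G) : Ultrafilter G) ∨
        ∀ A ∈ p, ∃ x : ℕ → ℕ → G,
          (∀ n : ℕ, ∀ i ≤ n, ∀ j ≤ n, i ≠ j → x n i ≠ x n j) ∧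
          (∀ n : ℕ, ∀ i j : ℕ, i < j → j ≤ n → (x n i)⁻¹ * x n j ∈ A)) := by
  classical
  simp only [Set.mem_iInter, Set.mem_setOf_eq]
  constructor
  · intro h
    by_cases hp : p = (pure (1 : G) : Ultrafilter G)
    · exact Or.inl hp
    right
    intro A hA
    have key : ∀ n : ℕ, ∃ f : ℕ → G,
        (∀ i ≤ n, ∀ j ≤ n, i ≠ j → f i ≠ f j) ∧
        (∀ i j, i < j → j ≤ n → (f i)⁻¹ * f j ∈ A) := by
      intro n
      by_contra hno
      have hD : IsDeltaLtOmega (Aᶜ ∪ {1} : Set G) := by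
        refine ⟨Or.inr rfl, 2 ^ n, ?_⟩
        intro Y hY
        by_contra hY2
        push_neg at hY2
        have htot : ∀ x ∈ Y, ∀ y ∈ Y, x ≠ y →
            (fun x y => x⁻¹ * y ∈ A) x y ∨ (fun x y => x⁻¹ * y ∈ A) y x := by
          intro x hx y hy hxy
          by_contra hc
          push_neg at hc
          exact hY2 x hx y hy hxy (Or.inl hc.1) (Or.inl hc.2)
        obtain ⟨f, hf1, hf2, hf3⟩ := tourn (fun x y => x⁻¹ * y ∈ A) n Y hY.ge htot
        exact hno ⟨f, hf2, hf3⟩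
      have hDp : (Aᶜ ∪ {1} : Set G) ∈ p := h _ hD
      have hone : ({1} : Set G) ∈ p := by
        have hint : A ∩ (Aᶜ ∪ {1}) ∈ p := Filter.inter_mem hA hDp
        refine Filter.mem_of_superset hint ?_
        rintro z ⟨hzA, hzD⟩
        rcases hzD with hz | hz
        · exact absurd hzA hz
        · exact hz
      obtain ⟨x, hx, hpx⟩ := Ultrafilter.eq_pure_of_finite_mem (Set.finite_singleton 1) hone
      rw [Set.mem_singleton_iff] at hx
      exact absurd (hx ▸ hpx) hp
    choose x hx1 hx2 using key
    exact ⟨x, hx1, hx2⟩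
  · rintro (rfl | h) D hD
    · exact hD.1
    · by_contra hDp
      have hAc : Dᶜ ∈ p := Ultrafilter.compl_mem_iff_notMem.mpr hDp
      obtain ⟨xf, hinj, hchain⟩ := h Dᶜ hAc
      obtain ⟨hone, n₀, hn₀⟩ := hD
      rcases Nat.eq_zero_or_pos n₀ with rfl | hpos'
      · obtain ⟨a, ha, -⟩ := hn₀ ∅ rfl
        simp at ha
      · set m := n₀ - 1 with hm
        set Y : Finset G := (Finset.range (m + 1)).image (xf m) with hYdef
        have hcard : Y.card = n₀ := by
          rw [hYdef, Finset.card_image_of_injOn, Finset.card_range]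
          · omega
          · intro i hi j hj hij
            by_contra hne
            exact hinj m i (by simpa using Nat.lt_succ_iff.mp (Finset.mem_range.mp hi))
              j (by simpa using Nat.lt_succ_iff.mp (Finset.mem_range.mp hj)) hne hij
        obtain ⟨a, haY, b, hbY, hab, h1, h2⟩ := hn₀ Y hcard
        rw [hYdef, Finset.mem_image] at haY hbY
        obtain ⟨i, hi, rfl⟩ := haY
        obtain ⟨j, hj, rfl⟩ := hbY
        have hi' : i ≤ m := Nat.lt_succ_iff.mp (Finset.mem_range.mp hi)
        have hj' : j ≤ m := Nat.lt_succ_iff.mp (Finset.mem_range.mp hj)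
        have hij : i ≠ j := fun e => hab (by rw [e])
        rcases Nat.lt_or_ge i j with hlt | hge
        · exact (hchain m i j hlt hj') h1
        · exact (hchain m j i (by omega) hi') h2
end
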